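/- Let V be a finite-dimensional real inner product space with basis Δ = {α₁,…,αₙ} satisfying ⟨αᵢ, αⱼ⟩ ≤ 0 for i ≠ j, and let {β₁,…,βₙ} be the dual basis defined by ⟨βᵢ, αⱼ⟩ = δᵢⱼ. Then ⟨βᵢ, βⱼ⟩ ≥ 0 for all 1 ≤ i, j ≤ n. -/

import Mathlib

/-!
Each `βⱼ` has nonnegative coordinates in the basis `α`, and `⟪βᵢ, βⱼ⟫` is the `i`-th of them.
For the first claim split the coordinate vector of `v := βⱼ` into positive and negative parts,
`v = p - m`. As `p` and `m` have disjoint supports and the `αₖ` are pairwise obtuse,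
`⟪p, m⟫ ≤ 0`, while `⟪v, m⟫ ≥ 0` because `⟪v, αₖ⟫ ≥ 0` for all `k`. Hence
`‖m‖² = ⟪p, m⟫ - ⟪v, m⟫ ≤ 0`, so `m = 0`.
-/

open RealInnerProductSpace

section ObtuseBasis

variable {V : Type*} [NormedAddCommGroup V] [InnerProductSpace ℝ V] {ι : Type*} [Fintype ι]

lemma inner_sum_smul_nonpos_of_pairwise_inner_nonpos (v : ι → V)
    (hv : Pairwise fun i j => ⟪v i, v j⟫ ≤ 0) {x y : ι → ℝ} (hx : 0 ≤ x) (hy : 0 ≤ y)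
    (hxy : ∀ i, x i * y i = 0) :
    ⟪∑ i, x i • v i, ∑ j, y j • v j⟫ ≤ 0 := by
  rw [sum_inner]
  simp_rw [real_inner_smul_left, inner_sum, real_inner_smul_right, Finset.mul_sum]
  refine Finset.sum_nonpos fun i _ => Finset.sum_nonpos fun j _ => ?_
  obtain rfl | hij := eq_or_ne i j
  · rw [← mul_assoc, hxy, zero_mul]
  · exact mul_nonpos_of_nonneg_of_nonpos (hx i) (mul_nonpos_of_nonneg_of_nonpos (hy j) (hv hij))

lemma Real.posPart_mul_negPart (a : ℝ) : a⁺ * a⁻ = 0 := by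
  rcases le_total a 0 with h | h <;> simp [h]

lemma Module.Basis.repr_nonneg_of_inner_nonneg (b : Module.Basis ι ℝ V)
    (hb : Pairwise fun i j => ⟪b i, b j⟫ ≤ 0) {v : V} (hv : ∀ j, 0 ≤ ⟪v, b j⟫) (k : ι) :
    0 ≤ b.repr v k := by
  set c := b.equivFun v
  set p := b.equivFun.symm c⁺
  set m := b.equivFun.symm c⁻
  have hvpm : v = p - m := by
    rw [← map_sub, ← b.equivFun.symm_apply_apply v, posPart_sub_negPart]
  have hpm : ⟪p, m⟫ ≤ 0 := by
    simp only [p, m, b.equivFun_symm_apply]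
    exact inner_sum_smul_nonpos_of_pairwise_inner_nonpos b hb (posPart_nonneg c)
      (negPart_nonneg c) fun i => Real.posPart_mul_negPart (c i)
  have hvm : 0 ≤ ⟪v, m⟫ := by
    simp only [m, b.equivFun_symm_apply, inner_sum, real_inner_smul_right]
    exact Finset.sum_nonneg fun j _ => mul_nonneg (negPart_nonneg (c j)) (hv j)
  have hm : m = 0 := by
    rw [← real_inner_self_nonpos]
    calc ⟪m, m⟫ = ⟪p, m⟫ - ⟪v, m⟫ := by rw [hvpm, inner_sub_left, sub_sub_cancel]
      _ ≤ 0 := by linarith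
  have hc : c⁻ = 0 := b.equivFun.symm.injective (hm.trans (map_zero _).symm)
  simpa [c] using congr_fun hc k

lemma Module.Basis.inner_eq_repr_of_inner_eq_ite [DecidableEq ι] (b : Module.Basis ι ℝ V)
    {w : V} {i : ι} (hw : ∀ k, ⟪w, b k⟫ = if i = k then 1 else 0) (v : V) :
    ⟪w, v⟫ = b.repr v i := by
  nth_rw 1 [← b.sum_repr v]
  rw [inner_sum]
  simp [real_inner_smul_right, hw]

end ObtuseBasis

theorem dual_basis_inner_nonneg_general
    {V : Type*} [NormedAddCommGroup V] [InnerProductSpace ℝ V]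
    {n : ℕ} (b : Module.Basis (Fin n) ℝ V)
    (hneg : ∀ i j, i ≠ j → ⟪b i, b j⟫ ≤ 0)
    (β : Fin n → V)
    (hdual : ∀ i j, ⟪β i, b j⟫ = if i = j then (1 : ℝ) else 0) :
    ∀ i j, 0 ≤ ⟪β i, β j⟫ := by
  intro i j
  have hβ_inner_nonneg (k : Fin n) : 0 ≤ ⟪β j, b k⟫ := by
    rw [hdual]
    split_ifs <;> norm_num
  rw [b.inner_eq_repr_of_inner_eq_ite (hdual i)]
  exact b.repr_nonneg_of_inner_nonneg (fun k l => hneg k l) hβ_inner_nonneg i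

/-- If a basis `α₁,…,αₙ` of a finite-dimensional real inner product space has pairwise
nonpositive inner products, then the vectors of the dual basis (characterized by
`⟪βᵢ, αⱼ⟫ = δᵢⱼ`) have pairwise nonnegative inner products. -/
theorem dual_basis_inner_nonneg
    {V : Type*} [NormedAddCommGroup V] [InnerProductSpace ℝ V] [FiniteDimensional ℝ V]
    {n : ℕ} (b : Module.Basis (Fin n) ℝ V)
    (hneg : ∀ i j, i ≠ j → ⟪b i, b j⟫ ≤ 0)
    (β : Fin n → V)
    (hdual : ∀ i j, ⟪β i, b j⟫ = if i = j then (1 : ℝ) else 0) :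
    ∀ i j, 0 ≤ ⟪β i, β j⟫ :=
  dual_basis_inner_nonneg_general b hneg β hdual
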